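/- arXiv:1906.00278 — 4 statements merged into one kernel-verified Lean document; each statement's English description precedes it below -/
import Mathlib

section
/- Suppose r < min_i N_i and r' < min_i N_i, f_1,...,f_r ∈ [0,1)^d are pairwise distinct, f'_1,...,f'_{r'} ∈ [0,1)^d are pairwise distinct, σ_ℓ > 0 for ℓ = 1,...,r and σ'_ℓ > 0 for ℓ = 1,...,r', and ∑_{ℓ=1}^{r} σ_ℓ a(f_ℓ) a(f_ℓ)ᴴ = ∑_{ℓ=1}^{r'} σ'_ℓ a(f'_ℓ) a(f'_ℓ)ᴴ. Then r = r' and there is a permutation π of {1,...,r} with f'_{π(ℓ)} = f_ℓ and σ'_{π(ℓ)} = σ_ℓ for all ℓ; that is, the (d+1)-tuples (f_ℓ, σ_ℓ) in the MD Vandermonde decomposition are unique. -/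
open Complex Matrix BigOperators
open scoped ComplexOrder

/-- The multi-dimensional sinusoid `a(f)`, `a(f)(m) = ∏ i, exp(2πi m_i f_i)`. -/
noncomputable def sinusoid {d : ℕ} (N : Fin d → ℕ) (f : Fin d → ℝ) :
    (∀ i, Fin (N i)) → ℂ :=
  fun m => ∏ i, Complex.exp (2 * (Real.pi : ℂ) * Complex.I * ((m i : ℕ) : ℂ) * ((f i : ℝ) : ℂ))

/-- The `d`-level block Toeplitz matrix `T(B)(m,n) = B(m-n)`. -/
noncomputable def toepT {d : ℕ} (N : Fin d → ℕ) (B : (Fin d → ℤ) → ℂ) :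
    Matrix (∀ i, Fin (N i)) (∀ i, Fin (N i)) ℂ :=
  Matrix.of fun m n => B (fun i => (m i : ℤ) - (n i : ℤ))

/-!
The matrix `∑ σ_ℓ a(f_ℓ) a(f_ℓ)ᴴ` determines the quadratic form `x ↦ ∑ σ_ℓ |a(f_ℓ)ᴴ x|²`.
Since `a(f)` lists the monomials `∏ z_i ^ m_i` at the point `z = (exp (2πi f_i))_i`, pairing it
with the coefficient vector of a polynomial of degree `< N_i` in the `i`-th variable evaluates that
polynomial at `z`. Given fewer than `min N_i` frequencies `g_ℓ` and a frequency `h` different from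
all of them, the product of the linear factors `z_{c ℓ} - exp (2πi g_ℓ(c ℓ))`, where `c ℓ` is a
coordinate in which `g_ℓ` and `h` differ, yields a vector orthogonal to every `a(g_ℓ)` but not to
`a(h)`. Testing both quadratic forms on such vectors shows first that the two families of
frequencies coincide, and then that matching frequencies carry equal weights.
-/

open Finset

section WeightedGram

variable {n ι : Type*} [Fintype n] [Fintype ι]

def weightedGram (v : ι → n → ℂ) (σ : ι → ℝ) : Matrix n n ℂ :=
  ∑ ℓ, (σ ℓ : ℂ) • vecMulVec (v ℓ) (star (v ℓ))

lemma star_dotProduct_weightedGram_mulVec (v : ι → n → ℂ) (σ : ι → ℝ) (x : n → ℂ) :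
    star x ⬝ᵥ (weightedGram v σ *ᵥ x) = ((∑ ℓ, σ ℓ * normSq (star (v ℓ) ⬝ᵥ x) : ℝ) : ℂ) := by
  simp only [weightedGram, sum_mulVec, dotProduct_sum, smul_mulVec, vecMulVec_mulVec]
  push_cast
  refine sum_congr rfl fun ℓ _ => ?_
  rw [dotProduct_smul, dotProduct_smul, ← star_star (v ℓ), star_dotProduct_star, star_star]
  simp [normSq_eq_conj_mul_self, mul_comm]

lemma sum_mul_normSq_eq_of_weightedGram_eq {κ : Type*} [Fintype κ] {v : ι → n → ℂ}
    {v' : κ → n → ℂ} {σ : ι → ℝ} {σ' : κ → ℝ} (h : weightedGram v σ = weightedGram v' σ')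
    (x : n → ℂ) :
    ∑ ℓ, σ ℓ * normSq (star (v ℓ) ⬝ᵥ x) = ∑ m, σ' m * normSq (star (v' m) ⬝ᵥ x) := by
  exact_mod_cast (star_dotProduct_weightedGram_mulVec v σ x).symm.trans
    (h ▸ star_dotProduct_weightedGram_mulVec v' σ' x)

end WeightedGram

lemma exp_two_pi_I_mul_injOn :
    Set.InjOn (fun t : ℝ => Complex.exp (2 * Real.pi * Complex.I * t)) (Set.Ico 0 1) := by
  intro s hs t ht hst
  have hmem {x : ℝ} (hx : x ∈ Set.Ico (0 : ℝ) 1) : 2 * Real.pi * x ∈ Set.Ico 0 (2 * Real.pi) :=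
    ⟨by nlinarith [Real.pi_pos, hx.1], by nlinarith [Real.pi_pos, hx.2]⟩
  have key := Circle.exp_injOn_Ico (sub_zero _).le (hmem hs) (hmem ht)
    (Subtype.ext (by simpa [Circle.coe_exp, mul_comm, mul_left_comm] using hst))
  simpa [Real.pi_ne_zero] using key

lemma sinusoid_eq_prod_pow {d : ℕ} (N : Fin d → ℕ) (f : Fin d → ℝ) :
    sinusoid N f = fun m => ∏ i, Complex.exp (2 * Real.pi * Complex.I * f i) ^ (m i : ℕ) := by
  ext m
  refine prod_congr rfl fun i _ => ?_
  rw [← Complex.exp_nat_mul]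
  ring_nf

lemma exists_dotProduct_prod_pow_eq_prod_sub {d : ℕ} {N : Fin d → ℕ} {ι : Type*} [Fintype ι]
    (hN : ∀ i, Fintype.card ι < N i) (c : ι → Fin d) (w : ι → ℂ) :
    ∃ u : (∀ i, Fin (N i)) → ℂ, ∀ z : Fin d → ℂ,
      u ⬝ᵥ (fun m => ∏ i, z i ^ (m i : ℕ)) = ∏ ℓ, (z (c ℓ) - w ℓ) := by
  classical
  let exponent : Finset ι → ∀ i, Fin (N i) := fun T i =>
    ⟨#{ℓ ∈ T | c ℓ = i}, (card_filter_le _ _).trans_lt ((card_le_univ T).trans_lt (hN i))⟩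
  have monomial_exponent (z : Fin d → ℂ) (T : Finset ι) :
      ∏ i, z i ^ (exponent T i : ℕ) = ∏ ℓ ∈ T, z (c ℓ) := by
    simp only [exponent, ← prod_fiberwise' T c z, prod_const]
  -- the coefficient vector of `∏ ℓ, (X (c ℓ) - w ℓ)`, expanded over the subsets of `ι`
  refine ⟨∑ T, (∏ ℓ ∈ Tᶜ, -w ℓ) • Pi.single (exponent T) 1, fun z => ?_⟩
  simp only [sub_eq_add_neg, Fintype.prod_add, sum_dotProduct, smul_dotProduct,
    single_dotProduct, monomial_exponent, smul_eq_mul, one_mul, mul_comm]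

lemma exists_separating_sinusoid {d : ℕ} {N : Fin d → ℕ} {ι : Type*} [Fintype ι]
    (hN : ∀ i, Fintype.card ι < N i) {g : ι → Fin d → ℝ} {h : Fin d → ℝ}
    (hg : ∀ ℓ i, g ℓ i ∈ Set.Ico (0 : ℝ) 1) (hh : ∀ i, h i ∈ Set.Ico (0 : ℝ) 1)
    (hne : ∀ ℓ, g ℓ ≠ h) :
    ∃ x, (∀ ℓ, star (sinusoid N (g ℓ)) ⬝ᵥ x = 0) ∧ star (sinusoid N h) ⬝ᵥ x ≠ 0 := by
  choose c hc using fun ℓ => Function.ne_iff.mp (hne ℓ)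
  let z (f : Fin d → ℝ) (i : Fin d) : ℂ := Complex.exp (2 * Real.pi * Complex.I * f i)
  obtain ⟨u, hu⟩ := exists_dotProduct_prod_pow_eq_prod_sub hN c fun ℓ => z (g ℓ) (c ℓ)
  have hu' (f : Fin d → ℝ) : u ⬝ᵥ sinusoid N f = ∏ ℓ, (z f (c ℓ) - z (g ℓ) (c ℓ)) := by
    rw [sinusoid_eq_prod_pow]
    exact hu _
  refine ⟨star u, fun ℓ => ?_, ?_⟩
  · rw [star_dotProduct_star, hu', prod_eq_zero (mem_univ ℓ) (sub_self _), star_zero]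
  · rw [star_dotProduct_star, hu', star_ne_zero, prod_ne_zero_iff]
    exact fun ℓ _ => sub_ne_zero.mpr fun heq =>
      hc ℓ (exp_two_pi_I_mul_injOn (hh _) (hg _ _) heq).symm

section SinusoidDecomposition

variable {d : ℕ} {N : Fin d → ℕ} {ι κ : Type*} [Fintype ι] [Fintype κ]
  {f : ι → Fin d → ℝ} {f' : κ → Fin d → ℝ} {σ : ι → ℝ} {σ' : κ → ℝ}

lemma exists_eq_of_weightedGram_sinusoid_eq (hN : ∀ i, Fintype.card ι < N i)
    (hf : ∀ ℓ i, f ℓ i ∈ Set.Ico (0 : ℝ) 1) (hf' : ∀ m i, f' m i ∈ Set.Ico (0 : ℝ) 1)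
    (hσ' : ∀ m, 0 < σ' m)
    (h : weightedGram (fun ℓ => sinusoid N (f ℓ)) σ = weightedGram (fun m => sinusoid N (f' m)) σ')
    (m : κ) : ∃ ℓ, f ℓ = f' m := by
  by_contra! hne
  obtain ⟨x, hx, hxm⟩ := exists_separating_sinusoid hN hf (hf' m) hne
  have hzero := sum_mul_normSq_eq_of_weightedGram_eq h x
  simp only [hx, map_zero, mul_zero, sum_const_zero] at hzero
  have hterm := (sum_eq_zero_iff_of_nonneg fun m _ => mul_nonneg (hσ' m).le (normSq_nonneg _)).mp
    hzero.symm m (mem_univ m)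
  exact hxm (normSq_eq_zero.mp ((mul_eq_zero.mp hterm).resolve_left (hσ' m).ne'))

lemma weight_eq_of_weightedGram_sinusoid_eq (hN : ∀ i, Fintype.card ι < N i)
    (hfinj : Function.Injective f) (hf'inj : Function.Injective f')
    (hf : ∀ ℓ i, f ℓ i ∈ Set.Ico (0 : ℝ) 1) (hrange : ∀ m, ∃ ℓ, f ℓ = f' m)
    (h : weightedGram (fun ℓ => sinusoid N (f ℓ)) σ = weightedGram (fun m => sinusoid N (f' m)) σ')
    {ℓ : ι} {m : κ} (hm : f' m = f ℓ) : σ' m = σ ℓ := by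
  classical
  obtain ⟨x, hx, hxℓ⟩ := exists_separating_sinusoid (g := fun ℓ' : {ℓ' // ℓ' ≠ ℓ} => f ℓ')
    (fun i => (Fintype.card_subtype_le _).trans_lt (hN i)) (fun ℓ' => hf ℓ') (hf ℓ)
    (fun ℓ' => hfinj.ne ℓ'.2)
  have hsum := sum_mul_normSq_eq_of_weightedGram_eq h x
  rw [sum_eq_single ℓ (fun ℓ' _ hℓ' => by simp [hx ⟨ℓ', hℓ'⟩]) (by simp),
    sum_eq_single m ?_ (by simp), hm] at hsum
  · exact (mul_right_cancel₀ (normSq_pos.mpr hxℓ).ne' hsum).symm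
  · intro m' _ hm'
    obtain ⟨ℓ', hℓ'⟩ := hrange m'
    have hℓ'ℓ : ℓ' ≠ ℓ := fun e => hm' (hf'inj (by rw [← hℓ', e, hm]))
    simp [← hℓ', hx ⟨ℓ', hℓ'ℓ⟩]

end SinusoidDecomposition

theorem stmt1_general {d : ℕ} (N : Fin d → ℕ)
    (r r' : ℕ) (hr : ∀ i, r < N i) (hr' : ∀ i, r' < N i)
    (f : Fin r → (Fin d → ℝ)) (f' : Fin r' → (Fin d → ℝ))
    (hfinj : Function.Injective f) (hfinj' : Function.Injective f')
    (hfmem : ∀ ℓ i, f ℓ i ∈ Set.Ico (0 : ℝ) 1)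
    (hfmem' : ∀ ℓ i, f' ℓ i ∈ Set.Ico (0 : ℝ) 1)
    (σ : Fin r → ℝ) (σ' : Fin r' → ℝ)
    (hσ : ∀ ℓ, 0 < σ ℓ) (hσ' : ∀ ℓ, 0 < σ' ℓ)
    (heq : ∑ ℓ, (σ ℓ : ℂ) • Matrix.vecMulVec (sinusoid N (f ℓ)) (star (sinusoid N (f ℓ)))
         = ∑ ℓ, (σ' ℓ : ℂ) • Matrix.vecMulVec (sinusoid N (f' ℓ)) (star (sinusoid N (f' ℓ)))) :
    r = r' ∧ ∃ e : Fin r ≃ Fin r', ∀ ℓ, f' (e ℓ) = f ℓ ∧ σ' (e ℓ) = σ ℓ := by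
  replace hr : ∀ i, Fintype.card (Fin r) < N i := by simpa using hr
  replace hr' : ∀ i, Fintype.card (Fin r') < N i := by simpa using hr'
  change weightedGram _ σ = weightedGram _ σ' at heq
  have hrange := exists_eq_of_weightedGram_sinusoid_eq hr hfmem hfmem' hσ' heq
  choose e he using exists_eq_of_weightedGram_sinusoid_eq hr' hfmem' hfmem hσ heq.symm
  have he_bij : Function.Bijective e :=
    ⟨fun a b hab => hfinj (by rw [← he a, ← he b, hab]),
      fun m => (hrange m).imp fun ℓ hℓ => hfinj' (by rw [he, hℓ])⟩
  refine ⟨by simpa using Fintype.card_congr (Equiv.ofBijective e he_bij),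
    Equiv.ofBijective e he_bij, fun ℓ => ⟨he ℓ, ?_⟩⟩
  exact weight_eq_of_weightedGram_sinusoid_eq hr hfinj hfinj' hfmem hrange heq (he ℓ)

/-- Uniqueness of the MD Vandermonde decomposition: two decompositions of the same
matrix with fewer than `min_i N_i` atoms coincide up to a permutation. -/
theorem stmt1 {d : ℕ} (hd : 1 ≤ d) (N : Fin d → ℕ) (hN : ∀ i, 2 ≤ N i)
    (r r' : ℕ) (hr : ∀ i, r < N i) (hr' : ∀ i, r' < N i)
    (f : Fin r → (Fin d → ℝ)) (f' : Fin r' → (Fin d → ℝ))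
    (hfinj : Function.Injective f) (hfinj' : Function.Injective f')
    (hfmem : ∀ ℓ i, f ℓ i ∈ Set.Ico (0 : ℝ) 1)
    (hfmem' : ∀ ℓ i, f' ℓ i ∈ Set.Ico (0 : ℝ) 1)
    (σ : Fin r → ℝ) (σ' : Fin r' → ℝ)
    (hσ : ∀ ℓ, 0 < σ ℓ) (hσ' : ∀ ℓ, 0 < σ' ℓ)
    (heq : ∑ ℓ, (σ ℓ : ℂ) • Matrix.vecMulVec (sinusoid N (f ℓ)) (star (sinusoid N (f ℓ)))
         = ∑ ℓ, (σ' ℓ : ℂ) • Matrix.vecMulVec (sinusoid N (f' ℓ)) (star (sinusoid N (f' ℓ)))) :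
    r = r' ∧ ∃ e : Fin r ≃ Fin r', ∀ ℓ, f' (e ℓ) = f ℓ ∧ σ' (e ℓ) = σ ℓ :=
  stmt1_general N r r' hr hr' f f' hfinj hfinj' hfmem hfmem' σ σ' hσ hσ' heq
end

section
/- Let 0 ≤ f_{L,i} < f_{H,i} < 1 for i = 1,...,d and let g_i be the trigonometric polynomial with coefficients r_{0,i} = -2cos(π(f_{H,i} - f_{L,i})) and r_{1,i} = e^{iπ(f_{L,i} + f_{H,i})}. Let r ≥ 1, let σ_1,...,σ_r be positive reals, and let f_1,...,f_r ∈ ℝ^d satisfy f_{i,ℓ} ∈ [f_{L,i}, f_{H,i}] for all i and ℓ. Define B : ℤ^d → ℂ by B(p) = ∑_{ℓ=1}^{r} σ_ℓ ∏_{i=1}^{d} e^{2πi p_i f_{i,ℓ}}. Then T(B) = ∑_{ℓ=1}^{r} σ_ℓ a(f_ℓ) a(f_ℓ)ᴴ is positive semidefinite, and each filtered matrix T_{g_i}(B), i = 1,...,d, is positive semidefinite. -/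
open Complex Matrix BigOperators
open scoped ComplexOrder

/-- The filtered matrix `T_{g_i}(B)(m,n) = ∑_{k=-1}^1 r_k B(m-n-k e_i)`,
with `r_{-1} = conj r_1`, indexed by `Ī = ∏ i {0,…,N_i-2}`. -/
noncomputable def toepTg {d : ℕ} (N : Fin d → ℕ) (i0 : Fin d) (r0 : ℝ) (r1 : ℂ)
    (B : (Fin d → ℤ) → ℂ) :
    Matrix (∀ i, Fin (N i - 1)) (∀ i, Fin (N i - 1)) ℂ :=
  Matrix.of fun m n =>
    (starRingEnd ℂ) r1 * B (fun i => (m i : ℤ) - (n i : ℤ) + (if i = i0 then 1 else 0)) +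
    (r0 : ℂ) * B (fun i => (m i : ℤ) - (n i : ℤ)) +
    r1 * B (fun i => (m i : ℤ) - (n i : ℤ) - (if i = i0 then 1 else 0))

/-!
Since `B` is a positive combination of the characters `p ↦ ∏ i, e^{2πi p_i f_{i,ℓ}}` of `ℤ^d`,
`T(B)` is the positive combination `∑ ℓ σ_ℓ a(f_ℓ) a(f_ℓ)ᴴ` of rank-one PSD matrices. Filtering in
direction `i` multiplies the `ℓ`-th term by `g_i(f_{i,ℓ})`, and for these coefficients
`g_i(x) = 2 cos(π(f_L + f_H - 2x)) - 2 cos(π(f_H - f_L))`, which is nonnegative on `[f_L, f_H]`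
since `|f_L + f_H - 2x| ≤ f_H - f_L ≤ 1` and `cos` decreases on `[0, π]`.
-/

noncomputable def expChar {d : ℕ} (t : Fin d → ℝ) (p : Fin d → ℤ) : ℂ :=
  ∏ i, Complex.exp (2 * (Real.pi : ℂ) * Complex.I * ((p i : ℤ) : ℂ) * ((t i : ℝ) : ℂ))

noncomputable def trigPoly (r0 : ℝ) (r1 : ℂ) (x : ℝ) : ℝ :=
  r0 + 2 * (r1 * Complex.exp (-(2 * (Real.pi : ℂ) * Complex.I * (x : ℂ)))).re

lemma ofReal_trigPoly (r0 : ℝ) (r1 : ℂ) (x : ℝ) :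
    (trigPoly r0 r1 x : ℂ) =
      (starRingEnd ℂ) r1 * Complex.exp (2 * (Real.pi : ℂ) * Complex.I * (x : ℂ)) + r0 +
        r1 * Complex.exp (-(2 * (Real.pi : ℂ) * Complex.I * (x : ℂ))) := by
  rw [trigPoly, Complex.ofReal_add, Complex.ofReal_mul, Complex.re_eq_add_conj, map_mul,
    ← Complex.exp_conj]
  simp [map_ofNat]
  ring

lemma star_exp_two_pi_I_mul (x : ℝ) :
    star (Complex.exp (2 * (Real.pi : ℂ) * Complex.I * (x : ℂ)))
      = Complex.exp (-(2 * (Real.pi : ℂ) * Complex.I * (x : ℂ))) := by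
  rw [Complex.star_def, ← Complex.exp_conj]
  simp [map_ofNat]

section expChar

variable {d : ℕ} (t : Fin d → ℝ)

lemma expChar_add (a b : Fin d → ℤ) : expChar t (a + b) = expChar t a * expChar t b := by
  rw [expChar, expChar, expChar, ← Finset.prod_mul_distrib]
  refine Finset.prod_congr rfl fun i _ => ?_
  rw [← Complex.exp_add, Pi.add_apply, Int.cast_add]
  ring_nf

lemma expChar_neg (a : Fin d → ℤ) : expChar t (-a) = star (expChar t a) := by
  simp only [expChar, star_prod, Pi.neg_apply]
  refine Finset.prod_congr rfl fun i _ => ?_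
  rw [Complex.star_def, ← Complex.exp_conj, Int.cast_neg]
  simp [map_ofNat]

lemma expChar_sub (a b : Fin d → ℤ) : expChar t (a - b) = expChar t a * star (expChar t b) := by
  rw [sub_eq_add_neg, expChar_add, expChar_neg]

lemma expChar_single (i₀ : Fin d) :
    expChar t (Pi.single i₀ 1) = Complex.exp (2 * (Real.pi : ℂ) * Complex.I * (t i₀ : ℂ)) := by
  rw [expChar, Finset.prod_eq_single i₀ (fun i _ hi => by simp [hi]) (by simp)]
  simp

lemma sinusoid_apply_eq_expChar (N : Fin d → ℕ) (m : ∀ i, Fin (N i)) :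
    sinusoid N t m = expChar t (fun i => (m i : ℤ)) := by
  simp [sinusoid, expChar]

end expChar

lemma posSemidef_sum_smul_vecMulVec {ι n : Type*} [Fintype ι] [Fintype n] (c : ι → ℂ)
    (v : ι → n → ℂ) (hc : ∀ ℓ, 0 ≤ c ℓ) :
    (∑ ℓ, c ℓ • vecMulVec (v ℓ) (star (v ℓ))).PosSemidef :=
  Matrix.posSemidef_sum _ fun ℓ _ => (posSemidef_vecMulVec_self_star (v ℓ)).smul (hc ℓ)

section Toeplitz

variable {d : ℕ} {ι : Type*} [Fintype ι] (N : Fin d → ℕ) (σ : ι → ℂ) (f : ι → Fin d → ℝ)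
  (B : (Fin d → ℤ) → ℂ)

lemma toepT_eq_sum_vecMulVec (hB : ∀ p, B p = ∑ ℓ, σ ℓ * expChar (f ℓ) p) :
    toepT N B = ∑ ℓ, σ ℓ • vecMulVec (sinusoid N (f ℓ)) (star (sinusoid N (f ℓ))) := by
  ext m n
  simp only [toepT, of_apply, hB, Matrix.sum_apply, Matrix.smul_apply, vecMulVec_apply,
    Pi.star_apply, sinusoid_apply_eq_expChar, smul_eq_mul, ← expChar_sub]
  rfl

lemma toepTg_eq_sum_vecMulVec (i₀ : Fin d) (r0 : ℝ) (r1 : ℂ)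
    (hB : ∀ p, B p = ∑ ℓ, σ ℓ * expChar (f ℓ) p) :
    toepTg N i₀ r0 r1 B = ∑ ℓ, (σ ℓ * trigPoly r0 r1 (f ℓ i₀)) •
      vecMulVec (sinusoid (fun i => N i - 1) (f ℓ)) (star (sinusoid (fun i => N i - 1) (f ℓ))) := by
  ext m n
  set D : Fin d → ℤ := fun i => (m i : ℤ) - (n i : ℤ) with hD
  have hplus :
      (fun i => (m i : ℤ) - (n i : ℤ) + if i = i₀ then 1 else 0) = D + Pi.single i₀ 1 := by
    ext i; simp [D, Pi.single_apply]
  have hminus :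
      (fun i => (m i : ℤ) - (n i : ℤ) - if i = i₀ then 1 else 0) = D - Pi.single i₀ 1 := by
    ext i; simp [D, Pi.single_apply]
  simp only [toepTg, of_apply, hplus, hminus, hB, Matrix.sum_apply, Matrix.smul_apply,
    vecMulVec_apply, Pi.star_apply, sinusoid_apply_eq_expChar, smul_eq_mul, Finset.mul_sum,
    ← Finset.sum_add_distrib]
  refine Finset.sum_congr rfl fun ℓ _ => ?_
  rw [expChar_add, expChar_sub _ D, expChar_single, star_exp_two_pi_I_mul, ofReal_trigPoly, hD,
    show (fun i => (m i : ℤ) - (n i : ℤ)) = (fun i => (m i : ℤ)) - fun i => (n i : ℤ) from rfl,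
    expChar_sub]
  ring

end Toeplitz

lemma trigPoly_bandpass (fL fH x : ℝ) :
    trigPoly (-2 * Real.cos (Real.pi * (fH - fL)))
        (Complex.exp ((Real.pi : ℂ) * Complex.I * ((fL : ℂ) + (fH : ℂ)))) x
      = 2 * Real.cos (Real.pi * (fL + fH - 2 * x)) - 2 * Real.cos (Real.pi * (fH - fL)) := by
  have hphase : (Real.pi : ℂ) * Complex.I * ((fL : ℂ) + (fH : ℂ))
      + -(2 * (Real.pi : ℂ) * Complex.I * (x : ℂ))
      = ((Real.pi * (fL + fH - 2 * x) : ℝ) : ℂ) * Complex.I := by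
    push_cast; ring
  rw [trigPoly, ← Complex.exp_add, hphase, Complex.exp_ofReal_mul_I_re]
  ring

lemma trigPoly_bandpass_nonneg {fL fH x : ℝ} (hx : x ∈ Set.Icc fL fH) (hw : fH - fL ≤ 1) :
    0 ≤ trigPoly (-2 * Real.cos (Real.pi * (fH - fL)))
        (Complex.exp ((Real.pi : ℂ) * Complex.I * ((fL : ℂ) + (fH : ℂ)))) x := by
  have hcos : Real.cos (Real.pi * (fH - fL)) ≤ Real.cos (Real.pi * (fL + fH - 2 * x)) := by
    rw [← Real.cos_abs (Real.pi * (fL + fH - 2 * x))]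
    refine Real.cos_le_cos_of_nonneg_of_le_pi (abs_nonneg _)
      (by nlinarith [Real.pi_pos]) ?_
    rw [abs_le]
    constructor <;> nlinarith [Real.pi_pos, hx.1, hx.2]
  rw [trigPoly_bandpass]
  linarith

theorem stmt5_general {d : ℕ} (N : Fin d → ℕ)
    (fL fH : Fin d → ℝ) (hL0 : ∀ i, 0 ≤ fL i)
    (hH1 : ∀ i, fH i < 1)
    (r : ℕ) (σ : Fin r → ℝ) (hσ : ∀ ℓ, 0 < σ ℓ)
    (f : Fin r → Fin d → ℝ) (hf : ∀ ℓ i, f ℓ i ∈ Set.Icc (fL i) (fH i))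
    (B : (Fin d → ℤ) → ℂ)
    (hB : ∀ p : Fin d → ℤ, B p = ∑ ℓ, (σ ℓ : ℂ) *
      ∏ i, Complex.exp (2 * (Real.pi : ℂ) * Complex.I * ((p i : ℤ) : ℂ) * ((f ℓ i : ℝ) : ℂ))) :
    toepT N B = ∑ ℓ, (σ ℓ : ℂ) •
        Matrix.vecMulVec (sinusoid N (f ℓ)) (star (sinusoid N (f ℓ))) ∧
    (toepT N B).PosSemidef ∧
    ∀ i, (toepTg N i (-2 * Real.cos (Real.pi * (fH i - fL i)))
        (Complex.exp ((Real.pi : ℂ) * Complex.I * ((fL i : ℂ) + (fH i : ℂ)))) B).PosSemidef := by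
  have hσ_nonneg : ∀ ℓ, (0 : ℂ) ≤ σ ℓ := fun ℓ => by exact_mod_cast (hσ ℓ).le
  have hT := toepT_eq_sum_vecMulVec N (fun ℓ => (σ ℓ : ℂ)) f B hB
  refine ⟨hT, hT ▸ posSemidef_sum_smul_vecMulVec _ _ hσ_nonneg, fun i => ?_⟩
  rw [toepTg_eq_sum_vecMulVec N (fun ℓ => (σ ℓ : ℂ)) f B i _ _ hB]
  refine posSemidef_sum_smul_vecMulVec _ _ fun ℓ => mul_nonneg (hσ_nonneg ℓ) ?_
  exact_mod_cast trigPoly_bandpass_nonneg (hf ℓ i) (by linarith [hL0 i, hH1 i])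

/-- If `B(p) = ∑ ℓ σ_ℓ ∏ i e^{2πi p_i f_{i,ℓ}}` with `σ_ℓ > 0` and
`f_{i,ℓ} ∈ [f_{L,i}, f_{H,i}]`, then `T(B) = ∑ ℓ σ_ℓ a(f_ℓ) a(f_ℓ)ᴴ` is PSD and
every filtered matrix `T_{g_i}(B)` is PSD, where `g_i` has coefficients
`r_{0,i} = -2cos(π(f_{H,i}-f_{L,i}))`, `r_{1,i} = e^{iπ(f_{L,i}+f_{H,i})}`. -/
theorem stmt5 {d : ℕ} (hd : 1 ≤ d) (N : Fin d → ℕ) (hN : ∀ i, 2 ≤ N i)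
    (fL fH : Fin d → ℝ) (hL0 : ∀ i, 0 ≤ fL i) (hLH : ∀ i, fL i < fH i)
    (hH1 : ∀ i, fH i < 1)
    (r : ℕ) (hr : 1 ≤ r) (σ : Fin r → ℝ) (hσ : ∀ ℓ, 0 < σ ℓ)
    (f : Fin r → Fin d → ℝ) (hf : ∀ ℓ i, f ℓ i ∈ Set.Icc (fL i) (fH i))
    (B : (Fin d → ℤ) → ℂ)
    (hB : ∀ p : Fin d → ℤ, B p = ∑ ℓ, (σ ℓ : ℂ) *
      ∏ i, Complex.exp (2 * (Real.pi : ℂ) * Complex.I * ((p i : ℤ) : ℂ) * ((f ℓ i : ℝ) : ℂ))) :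
    toepT N B = ∑ ℓ, (σ ℓ : ℂ) •
        Matrix.vecMulVec (sinusoid N (f ℓ)) (star (sinusoid N (f ℓ))) ∧
    (toepT N B).PosSemidef ∧
    ∀ i, (toepTg N i (-2 * Real.cos (Real.pi * (fH i - fL i)))
        (Complex.exp ((Real.pi : ℂ) * Complex.I * ((fL i : ℂ) + (fH i : ℂ)))) B).PosSemidef :=
  stmt5_general N fL fH hL0 hH1 r σ hσ f hf B hB
end

section
/- Let σ_1,...,σ_r ∈ ℂ and f_1,...,f_r ∈ ℝ^d, and define B : ℤ^d → ℂ by B(p) = ∑_{ℓ=1}^{r} σ_ℓ ∏_{j=1}^{d} e^{2πi p_j f_{j,ℓ}}. Then for each coordinate i and all m, n ∈ Ī, T_{g_i}(B)(m,n) = ∑_{ℓ=1}^{r} σ_ℓ g_i(f_{i,ℓ}) ∏_{j=1}^{d} e^{2πi (m_j - n_j) f_{j,ℓ}}, where g_i(f) = r_{0,i} + 2Re(r_{1,i} e^{-2πi f}). Equivalently, T_{g_i}(B) = Ā · diag(σ_1 g_i(f_{i,1}), ..., σ_r g_i(f_{i,r})) · Āᴴ, where Ā is the matrix whose ℓ-th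 column is ā(f_ℓ) ∈ ℂ^{Ī} with ā(f_ℓ)(m) = ∏_{j=1}^{d} e^{2πi m_j f_{j,ℓ}}. -/
open Complex Matrix BigOperators
open scoped ComplexOrder

/-- The degree-one Hermitian trigonometric polynomial `g(f) = r_0 + 2 Re(r_1 e^{-2πi f})`. -/
noncomputable def gval (r0 : ℝ) (r1 : ℂ) (f : ℝ) : ℝ :=
  r0 + 2 * (r1 * Complex.exp (-(2 * (Real.pi : ℂ) * Complex.I * (f : ℂ)))).re

/-! The plane wave `p ↦ e^{2πi⟨p, f⟩}` is a character of `ℤ^d`, so shifting its argument by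
`±e_i` multiplies it by `e^{±2πi f_i}`: the three-term filter acts on it as multiplication by
`g_i(f_i)`, and the general `B` follows by linearity. The factorisation through `Ā` is the
identity `a(f)(m) · conj (a(f)(n)) = e^{2πi⟨m - n, f⟩}`. -/

open Finset

noncomputable def planeWave {d : ℕ} (f : Fin d → ℝ) (p : Fin d → ℤ) : ℂ :=
  ∏ j, Complex.exp (2 * (Real.pi : ℂ) * Complex.I * ((p j : ℤ) : ℂ) * ((f j : ℝ) : ℂ))

theorem planeWave_add {d : ℕ} (f : Fin d → ℝ) (p q : Fin d → ℤ) :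
    planeWave f (p + q) = planeWave f p * planeWave f q := by
  simp only [planeWave, ← prod_mul_distrib, ← Complex.exp_add]
  refine prod_congr rfl fun j _ => ?_
  rw [Pi.add_apply, Int.cast_add]
  ring_nf

theorem planeWave_single {d : ℕ} (f : Fin d → ℝ) (i : Fin d) (c : ℤ) :
    planeWave f (Pi.single i c) = Complex.exp (2 * (Real.pi : ℂ) * Complex.I * c * f i) := by
  rw [planeWave, prod_eq_single i (fun j _ hj => by simp [hj]) (by simp)]
  simp

theorem ofReal_gval (r0 : ℝ) (r1 : ℂ) (f : ℝ) :
    ((gval r0 r1 f : ℝ) : ℂ) = starRingEnd ℂ r1 * Complex.exp (2 * (Real.pi : ℂ) * Complex.I * f)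
      + r0 + r1 * Complex.exp (-(2 * (Real.pi : ℂ) * Complex.I * f)) := by
  have hconj : starRingEnd ℂ (r1 * Complex.exp (-(2 * (Real.pi : ℂ) * Complex.I * f)))
      = starRingEnd ℂ r1 * Complex.exp (2 * (Real.pi : ℂ) * Complex.I * f) := by
    rw [map_mul, ← Complex.exp_conj]
    simp [Complex.conj_ofReal, Complex.conj_I, map_ofNat]
  have hre : (((2 * (r1 * Complex.exp (-(2 * (Real.pi : ℂ) * Complex.I * f))).re : ℝ)) : ℂ)
      = r1 * Complex.exp (-(2 * (Real.pi : ℂ) * Complex.I * f))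
        + starRingEnd ℂ (r1 * Complex.exp (-(2 * (Real.pi : ℂ) * Complex.I * f))) := by
    rw [Complex.add_conj, Complex.ofReal_mul, Complex.ofReal_ofNat]
  rw [gval, Complex.ofReal_add, hre, hconj]
  ring

theorem toepTg_planeWave {d : ℕ} (N : Fin d → ℕ) (i0 : Fin d) (r0 : ℝ) (r1 : ℂ)
    (f : Fin d → ℝ) (m n : ∀ i, Fin (N i - 1)) :
    toepTg N i0 r0 r1 (planeWave f) m n
      = gval r0 r1 (f i0) * planeWave f (fun j => (m j : ℤ) - (n j : ℤ)) := by
  have hplus : (fun j => (m j : ℤ) - (n j : ℤ) + if j = i0 then 1 else 0)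
      = (fun j => (m j : ℤ) - (n j : ℤ)) + Pi.single i0 1 := by
    ext j; simp [Pi.single_apply]
  have hminus : (fun j => (m j : ℤ) - (n j : ℤ) - if j = i0 then 1 else 0)
      = (fun j => (m j : ℤ) - (n j : ℤ)) + Pi.single i0 (-1) := by
    ext j; rcases eq_or_ne j i0 with rfl | h <;> simp [*, sub_eq_add_neg]
  rw [toepTg, of_apply, hplus, hminus, planeWave_add, planeWave_add, planeWave_single,
    planeWave_single, ofReal_gval]
  push_cast
  ring_nf

theorem toepTg_linear_combination {d : ℕ} (N : Fin d → ℕ) (i0 : Fin d) (r0 : ℝ) (r1 : ℂ)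
    {ι : Type*} (s : Finset ι) (σ : ι → ℂ) (B : ι → (Fin d → ℤ) → ℂ) :
    toepTg N i0 r0 r1 (fun p => ∑ ℓ ∈ s, σ ℓ * B ℓ p)
      = ∑ ℓ ∈ s, σ ℓ • toepTg N i0 r0 r1 (B ℓ) := by
  ext m n
  simp only [toepTg, of_apply, Matrix.sum_apply, Matrix.smul_apply, smul_eq_mul, mul_sum,
    ← sum_add_distrib]
  exact sum_congr rfl fun ℓ _ => by ring

theorem sinusoid_mul_star_sinusoid {d : ℕ} (N : Fin d → ℕ) (f : Fin d → ℝ)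
    (m n : ∀ i, Fin (N i)) :
    sinusoid N f m * star (sinusoid N f n) = planeWave f (fun j => (m j : ℤ) - (n j : ℤ)) := by
  rw [sinusoid, sinusoid, star_prod, ← prod_mul_distrib, planeWave]
  refine prod_congr rfl fun j _ => ?_
  rw [RCLike.star_def, ← Complex.exp_conj, ← Complex.exp_add]
  congr 1
  simp only [map_mul, map_ofNat, Complex.conj_ofReal, Complex.conj_I, Complex.conj_natCast]
  push_cast
  ring

theorem stmt7_general {d : ℕ} (N : Fin d → ℕ)
    (r : ℕ) (σ : Fin r → ℂ) (f : Fin r → Fin d → ℝ)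
    (r0 : Fin d → ℝ) (r1 : Fin d → ℂ)
    (B : (Fin d → ℤ) → ℂ)
    (hB : ∀ p : Fin d → ℤ, B p = ∑ ℓ, σ ℓ *
      ∏ j, Complex.exp (2 * (Real.pi : ℂ) * Complex.I * ((p j : ℤ) : ℂ) * ((f ℓ j : ℝ) : ℂ))) :
    ∀ i : Fin d,
      (∀ m n : ∀ j, Fin (N j - 1),
        toepTg N i (r0 i) (r1 i) B m n
          = ∑ ℓ, σ ℓ * ((gval (r0 i) (r1 i) (f ℓ i) : ℝ) : ℂ) *
              ∏ j, Complex.exp (2 * (Real.pi : ℂ) * Complex.I *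
                (((m j : ℤ) - (n j : ℤ) : ℤ) : ℂ) * ((f ℓ j : ℝ) : ℂ))) ∧
      toepTg N i (r0 i) (r1 i) B
        = ∑ ℓ, (σ ℓ * ((gval (r0 i) (r1 i) (f ℓ i) : ℝ) : ℂ)) •
            Matrix.vecMulVec (sinusoid (fun j => N j - 1) (f ℓ))
              (star (sinusoid (fun j => N j - 1) (f ℓ))) := by
  intro i
  have hB_sum : B = fun p => ∑ ℓ, σ ℓ * planeWave (f ℓ) p := funext hB
  have entries : ∀ m n : ∀ j, Fin (N j - 1), toepTg N i (r0 i) (r1 i) B m n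
      = ∑ ℓ, σ ℓ * gval (r0 i) (r1 i) (f ℓ i)
          * planeWave (f ℓ) (fun j => (m j : ℤ) - (n j : ℤ)) := by
    intro m n
    simp only [hB_sum, toepTg_linear_combination, Matrix.sum_apply, Matrix.smul_apply, smul_eq_mul,
      toepTg_planeWave, mul_assoc]
  refine ⟨entries, ?_⟩
  ext m n
  simp only [entries, Matrix.sum_apply, Matrix.smul_apply, smul_eq_mul, vecMulVec_apply,
    Pi.star_apply, sinusoid_mul_star_sinusoid]

/-- For `B(p) = ∑ ℓ σ_ℓ ∏ j e^{2πi p_j f_{j,ℓ}}`, the filtered matrix satisfies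
`T_{g_i}(B)(m,n) = ∑ ℓ σ_ℓ g_i(f_{i,ℓ}) ∏ j e^{2πi (m_j-n_j) f_{j,ℓ}}`, i.e.
`T_{g_i}(B) = Ā diag(σ_ℓ g_i(f_{i,ℓ})) Āᴴ`. -/
theorem stmt7 {d : ℕ} (hd : 1 ≤ d) (N : Fin d → ℕ) (hN : ∀ i, 2 ≤ N i)
    (r : ℕ) (σ : Fin r → ℂ) (f : Fin r → Fin d → ℝ)
    (r0 : Fin d → ℝ) (r1 : Fin d → ℂ)
    (B : (Fin d → ℤ) → ℂ)
    (hB : ∀ p : Fin d → ℤ, B p = ∑ ℓ, σ ℓ *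
      ∏ j, Complex.exp (2 * (Real.pi : ℂ) * Complex.I * ((p j : ℤ) : ℂ) * ((f ℓ j : ℝ) : ℂ))) :
    ∀ i : Fin d,
      (∀ m n : ∀ j, Fin (N j - 1),
        toepTg N i (r0 i) (r1 i) B m n
          = ∑ ℓ, σ ℓ * ((gval (r0 i) (r1 i) (f ℓ i) : ℝ) : ℂ) *
              ∏ j, Complex.exp (2 * (Real.pi : ℂ) * Complex.I *
                (((m j : ℤ) - (n j : ℤ) : ℤ) : ℂ) * ((f ℓ j : ℝ) : ℂ))) ∧
      toepTg N i (r0 i) (r1 i) B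
        = ∑ ℓ, (σ ℓ * ((gval (r0 i) (r1 i) (f ℓ i) : ℝ) : ℂ)) •
            Matrix.vecMulVec (sinusoid (fun j => N j - 1) (f ℓ))
              (star (sinusoid (fun j => N j - 1) (f ℓ))) :=
  stmt7_general N r σ f r0 r1 B hB
end

section
/- Let A ∈ ℂ^{N×r} have full column rank (rank(A) = r), let σ_1,...,σ_r ≥ 0 be reals, let w ∈ ℂ^r, and let t > 0. If A · diag(σ) · Aᴴ − t^{-1} (A w)(A w)ᴴ is positive semidefinite, then ∑_{ℓ=1}^{r} σ_ℓ ≥ t^{-1} (∑_{ℓ=1}^{r} |w_ℓ|)^2. -/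
open Complex Matrix BigOperators
open scoped ComplexOrder

/-!
Since `A` has full column rank, `Aᴴ` is surjective, so some `z` has `Aᴴ z = x`, where
`x_ℓ = exp (i arg w_ℓ)` is the phase vector of `w`. Testing the positive semidefinite form on `z`
gives `zᴴ A diag(σ) Aᴴ z = ∑ σ_ℓ |x_ℓ|² = ∑ σ_ℓ` and `zᴴ A w = xᴴ w = ∑ |w_ℓ|`.
-/

namespace Matrix

variable {m n R : Type*}

theorem mulVec_surjective_of_rank_eq_card {K : Type*} [Field K] [Fintype m] [Fintype n]
    (B : Matrix m n K) (hB : B.rank = Fintype.card m) : Function.Surjective B.mulVec := by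
  change Function.Surjective B.mulVecLin
  rw [← LinearMap.range_eq_top]
  apply Submodule.eq_top_of_finrank_eq
  rw [← rank, hB, Module.finrank_fintype_fun_eq_card]

section StarRing

variable [Fintype m] [Fintype n] [CommRing R] [StarRing R]

theorem star_dotProduct_mul_mul_conjTranspose_mulVec (A : Matrix m n R) (D : Matrix n n R)
    (z : m → R) :
    star z ⬝ᵥ ((A * D * Aᴴ) *ᵥ z) = star (Aᴴ *ᵥ z) ⬝ᵥ (D *ᵥ (Aᴴ *ᵥ z)) := by
  rw [← mulVec_mulVec, ← mulVec_mulVec, dotProduct_mulVec, star_mulVec, conjTranspose_conjTranspose]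

theorem star_dotProduct_vecMulVec_mulVec (A : Matrix m n R) (w : n → R) (z : m → R) :
    star z ⬝ᵥ (vecMulVec (A *ᵥ w) (star (A *ᵥ w)) *ᵥ z) =
      (star (Aᴴ *ᵥ z) ⬝ᵥ w) * star (star (Aᴴ *ᵥ z) ⬝ᵥ w) := by
  have hAw : star z ⬝ᵥ (A *ᵥ w) = star (Aᴴ *ᵥ z) ⬝ᵥ w := by
    rw [dotProduct_mulVec, star_mulVec, conjTranspose_conjTranspose]
  rw [vecMulVec_mulVec, dotProduct_smul, star_dotProduct (A *ᵥ w) z, hAw, op_smul_eq_mul]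

theorem star_dotProduct_diagonal_mulVec_of_star_mul_self_eq_one {d x : n → R}
    [DecidableEq n] (hx : ∀ i, star (x i) * x i = 1) :
    star x ⬝ᵥ (diagonal d *ᵥ x) = ∑ i, d i := by
  simp only [dotProduct, mulVec_diagonal, Pi.star_apply]
  refine Finset.sum_congr rfl fun i _ => ?_
  rw [mul_left_comm, hx, mul_one]

end StarRing

end Matrix

namespace Complex

open scoped ComplexConjugate

theorem conj_exp_arg_mul_I_mul_self (w : ℂ) :
    conj (exp (arg w * I)) * exp (arg w * I) = 1 := by
  rw [← normSq_eq_conj_mul_self, normSq_eq_norm_sq, norm_exp_ofReal_mul_I, one_pow, ofReal_one]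

theorem conj_exp_arg_mul_I_mul (w : ℂ) : conj (exp (arg w * I)) * w = ‖w‖ := by
  calc conj (exp (arg w * I)) * w = conj (exp (arg w * I)) * (‖w‖ * exp (arg w * I)) := by
        rw [norm_mul_exp_arg_mul_I]
    _ = ‖w‖ := by rw [mul_left_comm, conj_exp_arg_mul_I_mul_self, mul_one]

end Complex

theorem stmt14_general {N r : ℕ} (A : Matrix (Fin N) (Fin r) ℂ) (hA : A.rank = r)
    (σ : Fin r → ℝ) (w : Fin r → ℂ) (t : ℝ)
    (h : (A * Matrix.diagonal (fun ℓ => (σ ℓ : ℂ)) * A.conjTranspose -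
        ((t : ℂ))⁻¹ • Matrix.vecMulVec (A.mulVec w) (star (A.mulVec w))).PosSemidef) :
    t⁻¹ * (∑ ℓ, ‖w ℓ‖) ^ 2 ≤ ∑ ℓ, σ ℓ := by
  set x : Fin r → ℂ := fun ℓ => exp (arg (w ℓ) * I)
  have hx_w : star x ⬝ᵥ w = ((∑ ℓ, ‖w ℓ‖ : ℝ) : ℂ) := by
    push_cast
    exact Finset.sum_congr rfl fun ℓ _ => conj_exp_arg_mul_I_mul (w ℓ)
  obtain ⟨z, hz⟩ := Aᴴ.mulVec_surjective_of_rank_eq_card (by simp [hA]) x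
  have hq := h.dotProduct_mulVec_nonneg z
  rw [sub_mulVec, dotProduct_sub, smul_mulVec, dotProduct_smul, smul_eq_mul,
    star_dotProduct_mul_mul_conjTranspose_mulVec, star_dotProduct_vecMulVec_mulVec, hz,
    star_dotProduct_diagonal_mulVec_of_star_mul_self_eq_one
      fun ℓ => conj_exp_arg_mul_I_mul_self (w ℓ), hx_w, star_def, conj_ofReal] at hq
  have hq_real : (0 : ℂ) ≤ ((∑ ℓ, σ ℓ - t⁻¹ * (∑ ℓ, ‖w ℓ‖) ^ 2 : ℝ) : ℂ) := by
    push_cast at hq ⊢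
    linear_combination hq
  linarith [Complex.zero_le_real.mp hq_real]

/-- If `A` has full column rank, `σ_ℓ ≥ 0`, `t > 0`, and
`A diag(σ) Aᴴ - t⁻¹ (Aw)(Aw)ᴴ` is PSD, then `∑ σ_ℓ ≥ t⁻¹ (∑ |w_ℓ|)²`. -/
theorem stmt14 {N r : ℕ} (A : Matrix (Fin N) (Fin r) ℂ) (hA : A.rank = r)
    (σ : Fin r → ℝ) (hσ : ∀ ℓ, 0 ≤ σ ℓ) (w : Fin r → ℂ) (t : ℝ) (ht : 0 < t)
    (h : (A * Matrix.diagonal (fun ℓ => (σ ℓ : ℂ)) * A.conjTranspose -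
        ((t : ℂ))⁻¹ • Matrix.vecMulVec (A.mulVec w) (star (A.mulVec w))).PosSemidef) :
    t⁻¹ * (∑ ℓ, ‖w ℓ‖) ^ 2 ≤ ∑ ℓ, σ ℓ :=
  stmt14_general A hA σ w t h
end
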